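/- arXiv:2602.20010 — 9 statements merged into one kernel-verified Lean document; each statement's English description precedes it below -/
import Mathlib

section
/- Let p, b_i, b_j, b_k, b_l, d_i, d_j, d_k, d_l be real numbers with p > 0, b_j ≥ 0, b_k ≤ b_j and d_k < d_j. Then max{2p + b_i − d_i, 5p + b_k + b_j − d_j, 3p + b_k − d_k, 6p + b_k + b_l − d_l} ≤ max{2p + b_i − d_i, 3p + b_j − d_j, 5p + b_j + b_k − d_k, 6p + b_j + b_l − d_l}. (Swapping jobs j and k in two consecutive interlaced pairs (i,j)(k,l) does not increase the maximum lateness when d_j > d_k.) -/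
/-- Swapping jobs j and k in two consecutive interlaced pairs (i,j)(k,l) does
not increase the maximum lateness when `d_j > d_k` (agreeable case). -/
theorem stmt_1 (p bi bj bk bl di dj dk dl : ℝ)
    (hp : 0 < p) (hbj : 0 ≤ bj) (hbk : bk ≤ bj) (hd : dk < dj) :
    max (2 * p + bi - di) (max (5 * p + bk + bj - dj)
      (max (3 * p + bk - dk) (6 * p + bk + bl - dl))) ≤
    max (2 * p + bi - di) (max (3 * p + bj - dj)
      (max (5 * p + bj + bk - dk) (6 * p + bj + bl - dl))) := by
  refine max_le (le_max_left _ _) (max_le ?_ (max_le ?_ ?_))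
  · exact le_trans (by linarith)
      (le_max_of_le_right (le_max_of_le_right (le_max_left _ _)))
  · exact le_trans (by linarith)
      (le_max_of_le_right (le_max_of_le_right (le_max_left _ _)))
  · exact le_trans (by linarith)
      (le_max_of_le_right (le_max_of_le_right (le_max_right _ _)))
end

section
/- Let p, b_i, b_j, b_k, b_l, d_i, d_j, d_k, d_l be real numbers with p > 0, b_i ≤ p, b_l ≥ 0, d_i > d_l, b_i − d_i > b_k − d_k, and 2p + b_i − d_i < 3p + b_j − d_j. Then max{2p + b_k − d_k, 3p + b_j − d_j, 5p + b_j + b_i − d_i, 6p + b_j + b_l − d_l} ≤ max{2p + b_i − d_i, 3p + b_j − d_j, 5p + b_j + b_k − d_k, 6p + b_j + b_l − d_l}. (Swapping the first jobs i and k of two consecutive interlaced pairs (i,j)(k,l) does not increase the maximum lateness in this case.) -/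
/-- Swapping the first jobs i and k of two consecutive interlaced pairs
(i,j)(k,l) does not increase the maximum lateness in this case. -/
theorem stmt_4 (p bi bj bk bl di dj dk dl : ℝ)
    (hp : 0 < p) (hbi : bi ≤ p) (hbl : 0 ≤ bl) (hd : dl < di)
    (hik : bi - di > bk - dk)
    (hij : 2 * p + bi - di < 3 * p + bj - dj) :
    max (2 * p + bk - dk) (max (3 * p + bj - dj)
      (max (5 * p + bj + bi - di) (6 * p + bj + bl - dl))) ≤
    max (2 * p + bi - di) (max (3 * p + bj - dj)
      (max (5 * p + bj + bk - dk) (6 * p + bj + bl - dl))) := by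
  refine max_le ?_ (max_le ?_ (max_le ?_ ?_)) <;>
    simp only [le_max_iff]
  · left; linarith
  · right; left; linarith
  · right; right; right; linarith
  · right; right; right; linarith
end

section
/- Let p, b_i, b_j, b_k, b_l, d_i, d_j, d_k, d_l be real numbers with p > 0, b_j ≥ 0, d_k ≤ d_j and b_k ≤ b_j. Then max{2p + b_i − d_i, 5p + b_k + b_j − d_j, 3p + b_k − d_k, 6p + b_k + b_l − d_l} ≤ max{2p + b_i − d_i, 3p + b_j − d_j, 5p + b_j + b_k − d_k, 6p + b_j + b_l − d_l}, and 6p + b_k + b_l ≤ 6p + b_j + b_l. (In two consecutive interlaced pairs (i,j)(k,l), swapping j and k does not increase the maximum lateness nor the makespan; this shows the first pair of interlaced pairs must be ordered (j,i) in the agreeable case.) -/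
/-- In two consecutive interlaced pairs (i,j)(k,l), swapping j and k does not
increase the maximum lateness nor the makespan (agreeable case). -/
theorem stmt_5 (p bi bj bk bl di dj dk dl : ℝ)
    (hp : 0 < p) (hbj : 0 ≤ bj) (hd : dk ≤ dj) (hb : bk ≤ bj) :
    (max (2 * p + bi - di) (max (5 * p + bk + bj - dj)
      (max (3 * p + bk - dk) (6 * p + bk + bl - dl))) ≤
    max (2 * p + bi - di) (max (3 * p + bj - dj)
      (max (5 * p + bj + bk - dk) (6 * p + bj + bl - dl)))) ∧
    6 * p + bk + bl ≤ 6 * p + bj + bl := by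
  constructor
  · apply max_le (le_max_left _ _)
    apply le_trans _ (le_max_right _ _)
    apply max_le
    · apply le_trans _ (le_max_right _ _)
      apply le_trans _ (le_max_left _ _)
      linarith
    · apply max_le
      · apply le_trans _ (le_max_right _ _)
        apply le_trans _ (le_max_left _ _)
        linarith
      · apply le_trans _ (le_max_right _ _)
        apply le_trans _ (le_max_right _ _)
        linarith
  · linarith
end

section
/- Let p, b_i, b_j, b_k, b_l, d_i, d_j, d_k, d_l be real numbers with p > 0, b_j ≥ 0, d_k ≤ d_j and b_k ≤ b_j. Then max{2p + b_i − d_i, 6p + b_k + b_j − d_j, 3p + b_k − d_k, 5p + b_k + b_l − d_l} ≤ max{2p + b_i − d_i, 3p + b_j − d_j, 6p + b_j + b_k − d_k, 5p + b_j + b_l − d_l}. (In consecutive interlaced pairs (i,j)(l,k), swapping j and k does not increase the maximum lateness and does not change the makespan.) -/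
/-- In consecutive interlaced pairs (i,j)(l,k), swapping j and k does not
increase the maximum lateness and does not change the makespan. -/
theorem stmt_6 (p bi bj bk bl di dj dk dl : ℝ)
    (hp : 0 < p) (hbj : 0 ≤ bj) (hd : dk ≤ dj) (hb : bk ≤ bj) :
    max (2 * p + bi - di) (max (6 * p + bk + bj - dj)
      (max (3 * p + bk - dk) (5 * p + bk + bl - dl))) ≤
    max (2 * p + bi - di) (max (3 * p + bj - dj)
      (max (6 * p + bj + bk - dk) (5 * p + bj + bl - dl))) := by
  apply max_le (le_max_left _ _)
  apply max_le
  · exact le_trans (by linarith) (le_max_of_le_right (le_max_of_le_right (le_max_left _ _)))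
  apply max_le
  · exact le_trans (by linarith) (le_max_of_le_right (le_max_of_le_right (le_max_left _ _)))
  · exact le_trans (by linarith) (le_max_of_le_right (le_max_of_le_right (le_max_right _ _)))
end

section
/- Let p, b_i, b_j, b_k, b_l, d_i, d_j, d_k, d_l be real numbers with p > 0, b_j ≥ 0, b_l ≤ b_j and d_l ≤ d_j. Then max{2p + b_i − d_i, 6p + b_l + b_j − d_j, 5p + b_l + b_k − d_k, 3p + b_l − d_l} ≤ max{2p + b_i − d_i, 3p + b_j − d_j, 5p + b_j + b_k − d_k, 6p + b_j + b_l − d_l}. (In consecutive interlaced pairs (i,j)(k,l) where j is a long job, b_j > p, and l is a short job, b_l ≤ p, exchanging j and l does not increase the maximum lateness.) -/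
/-- In consecutive interlaced pairs (i,j)(k,l) with j long and l short,
exchanging j and l does not increase the maximum lateness. -/
theorem stmt_8 (p bi bj bk bl di dj dk dl : ℝ)
    (hp : 0 < p) (hbj : 0 ≤ bj) (hb : bl ≤ bj) (hd : dl ≤ dj) :
    max (2 * p + bi - di) (max (6 * p + bl + bj - dj)
      (max (5 * p + bl + bk - dk) (3 * p + bl - dl))) ≤
    max (2 * p + bi - di) (max (3 * p + bj - dj)
      (max (5 * p + bj + bk - dk) (6 * p + bj + bl - dl))) := by
  apply max_le (le_max_left _ _)
  apply max_le
  · exact le_trans (by linarith) (le_max_of_le_right (le_max_of_le_right (le_max_right _ _)))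
  apply max_le
  · exact le_trans (by linarith) (le_max_of_le_right (le_max_of_le_right (le_max_left _ _)))
  · exact le_trans (by linarith) (le_max_of_le_right (le_max_of_le_right (le_max_right _ _)))
end

section
/- Let p, b_i, b_k, b_l, d_i, d_k, d_l be real numbers with p > 0, b_i ≥ 0, b_k ≤ b_i and d_k ≤ d_i. Then max{2p + b_k − d_k, 4p + b_k + b_i − d_i, 5p + b_k + b_l − d_l} ≤ max{2p + b_i − d_i, 4p + b_i + b_k − d_k, 5p + b_i + b_l − d_l} and 5p + b_k + b_l ≤ 5p + b_i + b_l. (Replacing the fragment i(k,l), a singleton i followed by an interlaced pair (k,l), by the fragment k(i,l) does not increase the maximum lateness nor the makespan when d_k ≤ d_i and b_k ≤ b_i.) -/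
/-- Replacing the fragment i(k,l) by the fragment k(i,l) does not increase the
maximum lateness nor the makespan when `d_k ≤ d_i` and `b_k ≤ b_i`. -/
theorem stmt_11 (p bi bk bl di dk dl : ℝ)
    (hp : 0 < p) (hbi : 0 ≤ bi) (hb : bk ≤ bi) (hd : dk ≤ di) :
    (max (2 * p + bk - dk) (max (4 * p + bk + bi - di) (5 * p + bk + bl - dl)) ≤
      max (2 * p + bi - di) (max (4 * p + bi + bk - dk) (5 * p + bi + bl - dl))) ∧
    5 * p + bk + bl ≤ 5 * p + bi + bl := by
  constructor
  · apply max_le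
    · exact le_max_of_le_right (le_max_of_le_left (by linarith))
    · apply max_le
      · exact le_max_of_le_right (le_max_of_le_left (by linarith))
      · exact le_max_of_le_right (le_max_of_le_right (by linarith))
  · linarith
end

section
/- Let p, b_i, b_k, b_l, d_i, d_k, d_l be real numbers with p > 0, b_l ≤ p, b_i ≥ 0 and d_i ≤ d_l. Then max{2p + b_k − d_k, 4p + b_k + b_l − d_l, 5p + b_k + b_i − d_i} ≤ max{2p + b_l − d_l, 3p + b_k − d_k, 5p + b_k + b_i − d_i}. (Replacing the fragment (l,k)i, an interlaced pair (l,k) followed by a singleton i, by the fragment k(l,i) does not increase the maximum lateness, and both fragments have the same makespan 5p + b_k + b_i.) -/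
/-- Replacing the fragment (l,k)i by the fragment k(l,i) does not increase the
maximum lateness. -/
theorem stmt_12 (p bi bk bl di dk dl : ℝ)
    (hp : 0 < p) (hbl : bl ≤ p) (hbi : 0 ≤ bi) (hd : di ≤ dl) :
    max (2 * p + bk - dk) (max (4 * p + bk + bl - dl) (5 * p + bk + bi - di)) ≤
    max (2 * p + bl - dl) (max (3 * p + bk - dk) (5 * p + bk + bi - di)) := by
  apply max_le
  · exact le_max_of_le_right (le_max_left _ _ |>.trans' (by linarith))
  · apply max_le
    · exact le_max_of_le_right (le_max_right _ _ |>.trans' (by linarith))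
    · exact le_max_of_le_right (le_max_right _ _)
end

section
/- Let p, b_i, b_j, b_k, b_l, d_i, d_j, d_k, d_l be real numbers with p > 0, b_j ≥ 0, b_i ≤ p + b_j, d_l ≤ d_j and d_l ≤ d_i. Then max{2p + b_k − d_k, 3p + b_l − d_l, 5p + b_l + b_i − d_i, 6p + b_l + b_j − d_j} ≤ max{2p + b_i − d_i, 3p + b_j − d_j, 5p + b_j + b_k − d_k, 6p + b_j + b_l − d_l}. (In the disagreeable case, swapping two consecutive interlaced pairs (i,j)(k,l) to (k,l)(i,j) does not increase the maximum lateness when l is a long job and j is short; hence pairs containing a long job precede pairs of short jobs.) -/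
/-- In the disagreeable case, swapping two consecutive interlaced pairs
(i,j)(k,l) to (k,l)(i,j) does not increase the maximum lateness when l is a
long job and j is short. -/
theorem stmt_18 (p bi bj bk bl di dj dk dl : ℝ)
    (hp : 0 < p) (hbj : 0 ≤ bj) (hbi : bi ≤ p + bj)
    (hdlj : dl ≤ dj) (hdli : dl ≤ di) :
    max (2 * p + bk - dk) (max (3 * p + bl - dl)
      (max (5 * p + bl + bi - di) (6 * p + bl + bj - dj))) ≤
    max (2 * p + bi - di) (max (3 * p + bj - dj)
      (max (5 * p + bj + bk - dk) (6 * p + bj + bl - dl))) := by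
  apply max_le
  · exact le_max_of_le_right <| le_max_of_le_right <|
      le_trans (by linarith) (le_max_left _ _)
  apply max_le
  · exact le_max_of_le_right <| le_max_of_le_right <|
      le_trans (by linarith) (le_max_right _ _)
  apply max_le
  · exact le_max_of_le_right <| le_max_of_le_right <|
      le_trans (by linarith) (le_max_right _ _)
  · exact le_max_of_le_right <| le_max_of_le_right <|
      le_trans (by linarith) (le_max_right _ _)
end

section
/- Let p, b_i, b_j, b_k, d_i, d_j, d_k be real numbers with p > 0, d_i ≤ d_j and b_j ≤ p + b_i. Then max{2p + b_k − d_k, 4p + b_k + b_j − d_j, 5p + b_k + b_i − d_i} ≤ max{2p + b_j − d_j, 3p + b_k − d_k, 5p + b_k + b_i − d_i}. (Replacing the fragment (j,k)i, an interlaced pair (j,k) followed by a singleton long job i, by the fragment k(j,i) does not increase the maximum lateness; hence in the disagreeable case singleton long jobs can be moved before all interlaced pairs.) -/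
/-- Replacing the fragment (j,k)i by the fragment k(j,i) does not increase the
maximum lateness (singleton long jobs can be moved before all pairs). -/
theorem stmt_19 (p bi bj bk di dj dk : ℝ)
    (hp : 0 < p) (hd : di ≤ dj) (hb : bj ≤ p + bi) :
    max (2 * p + bk - dk) (max (4 * p + bk + bj - dj) (5 * p + bk + bi - di)) ≤
    max (2 * p + bj - dj) (max (3 * p + bk - dk) (5 * p + bk + bi - di)) := by
  apply max_le
  · exact le_max_of_le_right (le_max_of_le_left (by linarith))
  apply max_le
  · exact le_max_of_le_right (le_max_of_le_right (by linarith))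
  · exact le_max_of_le_right (le_max_of_le_right le_rfl)
end
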